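/- Let A = Ã − I where Ã is a real n×n matrix with nonnegative entries. Then all eigenvalues of Ã have modulus strictly less than 1 if and only if all coefficients of the characteristic polynomial of A are strictly positive. -/

import Mathlib

open Matrix Polynomial Filter
open scoped NNReal


lemma coeff_nonneg_of_pos {q : ℝ[X]} (h : ∀ k ≤ q.natDegree, 0 < q.coeff k) :
    ∀ j, 0 ≤ q.coeff j := by
  intro j
  by_cases hj : j ≤ q.natDegree
  · exact (h j hj).le
  · rw [q.coeff_eq_zero_of_natDegree_lt (by omega)]

lemma hurwitz : ∀ (N : ℕ) (p : ℝ[X]), p.natDegree = N → p.Monic →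
    (∀ z : ℂ, (p.map (algebraMap ℝ ℂ)).eval z = 0 → z.re < 0) →
    ∀ k ≤ p.natDegree, 0 < p.coeff k := by
  intro N
  induction N using Nat.strong_induction_on with
  | _ N IH =>
    intro p hdeg hm hroots k hk
    rcases Nat.eq_zero_or_pos N with hN0 | hNpos
    · subst hN0
      rw [hdeg] at hk
      have hk0 : k = 0 := by omega
      subst hk0
      have := hm.coeff_natDegree
      rw [hdeg] at this
      simp [this]
    · -- find a complex root
      have hpm : p.map (algebraMap ℝ ℂ) ≠ 0 := (hm.map _).ne_zero
      have hdm : (p.map (algebraMap ℝ ℂ)).natDegree = N := by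
        rw [hm.natDegree_map, hdeg]
      obtain ⟨z, hz⟩ : ∃ z, (p.map (algebraMap ℝ ℂ)).IsRoot z := by
        apply Complex.exists_root
        rw [Polynomial.degree_eq_natDegree hpm, hdm]
        exact_mod_cast hNpos
      have hzre : z.re < 0 := hroots z hz
      by_cases him : z.im = 0
      · -- real root
        have hzr : ((z.re : ℂ)) = z := by
          apply Complex.ext <;> simp [him]
        have hre : p.eval z.re = 0 := by
          have h2 : (algebraMap ℝ ℂ) (p.eval z.re) = 0 := by
            rw [← Polynomial.eval₂_at_apply, ← Polynomial.eval_map]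
            rw [show ((algebraMap ℝ ℂ) z.re) = ((z.re : ℂ)) from rfl, hzr]
            exact hz
          rwa [show (algebraMap ℝ ℂ) (p.eval z.re) = ((p.eval z.re : ℝ) : ℂ) from rfl,
            Complex.ofReal_eq_zero] at h2
        set q := p /ₘ (X - C z.re) with hqdef
        have hpq : (X - C z.re) * q = p := (mul_divByMonic_eq_iff_isRoot).mpr hre
        have hqm : q.Monic := by
          have := hm
          rw [← hpq] at this
          exact (monic_X_sub_C z.re).of_mul_monic_left this
        have hqdeg : q.natDegree = N - 1 := by
          have := (monic_X_sub_C z.re).natDegree_mul hqm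
          rw [hpq, hdeg, natDegree_X_sub_C] at this
          omega
        have hqroots : ∀ w : ℂ, (q.map (algebraMap ℝ ℂ)).eval w = 0 → w.re < 0 := by
          intro w hw
          apply hroots
          rw [← hpq, Polynomial.map_mul, eval_mul, hw, mul_zero]
        have hq := IH (N - 1) (by omega) q hqdeg hqm hqroots
        rw [hqdeg] at hq
        have hqnn : ∀ j, 0 ≤ q.coeff j :=
          coeff_nonneg_of_pos (by rw [hqdeg]; exact hq)
        have ha : 0 < -z.re := by linarith
        have hcoeff : ∀ m, p.coeff m = (X * q).coeff m + (-z.re) * q.coeff m := by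
          intro m
          rw [← hpq, sub_mul, coeff_sub, coeff_C_mul]
          ring
        rw [hdeg] at hk
        rcases k with _ | k'
        · rw [hcoeff 0, mul_coeff_zero, coeff_X_zero, zero_mul, zero_add]
          exact mul_pos ha (hq 0 (by omega))
        · rw [hcoeff (k' + 1), coeff_X_mul]
          have h1 : 0 < q.coeff k' := hq k' (by omega)
          have h2 : 0 ≤ (-z.re) * q.coeff (k' + 1) := mul_nonneg ha.le (hqnn _)
          linarith
      · -- complex root, use quadratic factor
        have haev : aeval z p = 0 := by
          rw [aeval_def, ← Polynomial.eval_map]; exact hz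
        obtain ⟨q, hpq⟩ := p.quadratic_dvd_of_aeval_eq_zero_im_ne_zero haev him
        set d : ℝ[X] := X ^ 2 - C (2 * z.re) * X + C (‖z‖ ^ 2) with hddef
        have hdm : d.Monic := by
          unfold d
          monicity!
        have hqm : q.Monic := by
          have := hm
          rw [hpq] at this
          exact hdm.of_mul_monic_left this
        have hddeg : d.natDegree = 2 := by
          unfold d
          compute_degree!
        have hqdeg : q.natDegree = N - 2 ∧ 2 ≤ N := by
          have := hdm.natDegree_mul hqm
          rw [← hpq, hdeg, hddeg] at this
          omega
        have hqroots : ∀ w : ℂ, (q.map (algebraMap ℝ ℂ)).eval w = 0 → w.re < 0 := by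
          intro w hw
          apply hroots
          rw [hpq, Polynomial.map_mul, eval_mul, hw, mul_zero]
        have hq := IH (N - 2) (by omega) q hqdeg.1 hqm hqroots
        rw [hqdeg.1] at hq
        have hqnn : ∀ j, 0 ≤ q.coeff j :=
          coeff_nonneg_of_pos (by rw [hqdeg.1]; exact hq)
        have hb : 0 < -(2 * z.re) := by linarith
        have hc : (0:ℝ) < ‖z‖ ^ 2 := by
          have hz0 : z ≠ 0 := fun h => by simp [h] at hzre
          exact pow_pos (norm_pos_iff.mpr hz0) 2
        have hcoeff : ∀ m, p.coeff m =
            (X ^ 2 * q).coeff m + (-(2 * z.re)) * (X * q).coeff m + ‖z‖ ^ 2 * q.coeff m := by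
          intro m
          rw [hpq, hddef, add_mul, sub_mul, coeff_add, coeff_sub, mul_assoc,
            coeff_C_mul, coeff_C_mul]
          ring
        rw [hdeg] at hk
        have hx2q0 : (X ^ 2 * q : ℝ[X]).coeff 0 = 0 := by
          rw [mul_coeff_zero]; simp
        have hx2q1 : (X ^ 2 * q : ℝ[X]).coeff 1 = 0 := by
          rw [pow_two, mul_assoc, coeff_X_mul, mul_coeff_zero, coeff_X_zero, zero_mul]
        rcases k with _ | k'
        · rw [hcoeff 0, hx2q0, mul_coeff_zero, coeff_X_zero, zero_mul, mul_zero]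
          have := mul_pos hc (hq 0 (by omega))
          linarith
        rcases k' with _ | m
        · rw [hcoeff 1, hx2q1, coeff_X_mul]
          have h1 := mul_pos hb (hq 0 (by omega))
          have h2 : 0 ≤ ‖z‖ ^ 2 * q.coeff 1 := mul_nonneg hc.le (hqnn _)
          linarith
        · have e1 : (X ^ 2 * q : ℝ[X]).coeff (m + 2) = q.coeff m := coeff_X_pow_mul q 2 m
          rw [hcoeff (m + 2), e1, coeff_X_mul]
          have h1 : 0 < q.coeff m := hq m (by omega)
          have h2 : 0 ≤ (-(2 * z.re)) * q.coeff (m + 1) := mul_nonneg hb.le (hqnn _)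
          have h3 : 0 ≤ ‖z‖ ^ 2 * q.coeff (m + 2) := mul_nonneg hc.le (hqnn _)
          linarith

section Resolvent

variable {n : ℕ}

lemma entry_mul_nonneg {A B : Matrix (Fin n) (Fin n) ℝ} (hA : ∀ i j, 0 ≤ A i j)
    (hB : ∀ i j, 0 ≤ B i j) : ∀ i j, 0 ≤ (A * B) i j := by
  intro i j
  rw [Matrix.mul_apply]
  exact Finset.sum_nonneg fun k _ => mul_nonneg (hA i k) (hB k j)

lemma entry_pow_nonneg {A : Matrix (Fin n) (Fin n) ℝ} (hA : ∀ i j, 0 ≤ A i j) :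
    ∀ (k : ℕ) i j, 0 ≤ (A ^ k) i j := by
  intro k
  induction k with
  | zero => intro i j; rw [pow_zero]; by_cases h : i = j <;> simp [Matrix.one_apply, h]
  | succ m ih => rw [pow_succ]; exact entry_mul_nonneg ih hA

/-- Entrywise bound for the matrix inverse on a compact interval, using only the
default (pi) topology on matrices. -/
lemma entries_bound (Atil : Matrix (Fin n) (Fin n) ℝ) {s T : ℝ}
    (hdet : ∀ u ∈ Set.Icc s T, (u • (1 : Matrix (Fin n) (Fin n) ℝ) - Atil).det ≠ 0) :
    ∃ C : ℝ, 0 < C ∧ ∀ u ∈ Set.Icc s T, ∀ i j,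
      |(u • (1 : Matrix (Fin n) (Fin n) ℝ) - Atil)⁻¹ i j| ≤ C := by
  have hcontM : Continuous fun u : ℝ => u • (1 : Matrix (Fin n) (Fin n) ℝ) - Atil :=
    (continuous_id.smul continuous_const).sub continuous_const
  have key : ∀ p : Fin n × Fin n, ∃ C, ∀ u ∈ Set.Icc s T,
      |(u • (1 : Matrix (Fin n) (Fin n) ℝ) - Atil)⁻¹ p.1 p.2| ≤ C := by
    intro p
    have hc : ContinuousOn
        (fun u : ℝ => ((u • (1 : Matrix (Fin n) (Fin n) ℝ) - Atil).det)⁻¹ *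
          (u • (1 : Matrix (Fin n) (Fin n) ℝ) - Atil).adjugate p.1 p.2) (Set.Icc s T) := by
      apply ContinuousOn.mul
      · exact (hcontM.matrix_det.continuousOn).inv₀ hdet
      · exact ((hcontM.matrix_adjugate).matrix_elem _ _).continuousOn
    obtain ⟨C, hC⟩ := isCompact_Icc.exists_bound_of_continuousOn hc
    refine ⟨C, fun u hu => ?_⟩
    have heq : (u • (1 : Matrix (Fin n) (Fin n) ℝ) - Atil)⁻¹ p.1 p.2 =
        ((u • (1 : Matrix (Fin n) (Fin n) ℝ) - Atil).det)⁻¹ *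
          (u • (1 : Matrix (Fin n) (Fin n) ℝ) - Atil).adjugate p.1 p.2 := by
      rw [Matrix.inv_def, Matrix.smul_apply, Ring.inverse_eq_inv', smul_eq_mul]
    rw [heq]
    have := hC u hu
    rwa [Real.norm_eq_abs] at this
  choose Cf hCf using key
  refine ⟨1 + ∑ p : Fin n × Fin n, |Cf p|, by positivity, fun u hu i j => ?_⟩
  calc |(u • (1 : Matrix (Fin n) (Fin n) ℝ) - Atil)⁻¹ i j| ≤ Cf (i, j) := hCf (i, j) u hu
    _ ≤ |Cf (i, j)| := le_abs_self _
    _ ≤ ∑ p : Fin n × Fin n, |Cf p| :=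
        Finset.single_le_sum (fun p _ => abs_nonneg (Cf p)) (Finset.mem_univ (i, j))
    _ ≤ 1 + ∑ p : Fin n × Fin n, |Cf p| := by linarith

attribute [local instance] Matrix.linftyOpNormedRing Matrix.linftyOpNormedAlgebra
  Matrix.linftyOpNormedSpace Matrix.linftyOpIsBoundedSMul

lemma matrixComplete : CompleteSpace (Matrix (Fin n) (Fin n) ℝ) :=
  (by infer_instance : CompleteSpace (Fin n → Fin n → ℝ))

attribute [local instance] matrixComplete

lemma norm_le_of_entries {M : Matrix (Fin n) (Fin n) ℝ} {C : ℝ} (hC : 0 ≤ C)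
    (h : ∀ i j, |M i j| ≤ C) : ‖M‖ ≤ n * C := by
  have h' : ∀ i j, ‖M i j‖₊ ≤ C.toNNReal := by
    intro i j
    rw [← NNReal.coe_le_coe, coe_nnnorm, Real.coe_toNNReal _ hC, Real.norm_eq_abs]
    exact h i j
  have hnn : ‖M‖₊ ≤ (n : ℝ≥0) * C.toNNReal := by
    rw [Matrix.linfty_opNNNorm_def]
    apply Finset.sup_le
    intro i _
    calc ∑ j, ‖M i j‖₊ ≤ ∑ _j : Fin n, C.toNNReal := Finset.sum_le_sum fun j _ => h' i j
      _ = (n : ℝ≥0) * C.toNNReal := by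
          rw [Finset.sum_const, Finset.card_univ, Fintype.card_fin, nsmul_eq_mul]
  calc ‖M‖ = ((‖M‖₊ : ℝ≥0) : ℝ) := (coe_nnnorm _).symm
    _ ≤ (((n : ℝ≥0) * C.toNNReal : ℝ≥0) : ℝ) := NNReal.coe_le_coe.mpr hnn
    _ = n * C := by push_cast [Real.coe_toNNReal _ hC]; ring

lemma entry_tsum_nonneg {x : ℕ → Matrix (Fin n) (Fin n) ℝ} (hs : Summable x)
    (hx : ∀ k i j, 0 ≤ x k i j) (i j : Fin n) : 0 ≤ (∑' k, x k) i j := by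
  have hbd : ∀ M : Matrix (Fin n) (Fin n) ℝ, ‖M i j‖ ≤ 1 * ‖M‖ := by
    intro M
    rw [one_mul, ← coe_nnnorm, ← coe_nnnorm, NNReal.coe_le_coe, Matrix.linfty_opNNNorm_def]
    calc ‖M i j‖₊ ≤ ∑ k, ‖M i k‖₊ :=
          Finset.single_le_sum (f := fun k => ‖M i k‖₊) (fun k _ => by positivity)
            (Finset.mem_univ j)
      _ ≤ _ := Finset.le_sup (f := fun r => ∑ k, ‖M r k‖₊) (Finset.mem_univ i)
  let e : Matrix (Fin n) (Fin n) ℝ →ₗ[ℝ] ℝ :=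
    { toFun := fun M => M i j
      map_add' := fun _ _ => rfl
      map_smul' := fun _ _ => rfl }
  let E : Matrix (Fin n) (Fin n) ℝ →L[ℝ] ℝ := LinearMap.mkContinuous e 1 hbd
  have hhs : HasSum (fun k => E (x k)) (E (∑' k, x k)) := (hs.hasSum).mapL E
  have key : 0 ≤ E (∑' k, x k) := by
    refine ge_of_tendsto' hhs fun sfin => ?_
    exact Finset.sum_nonneg fun k _ => hx k i j
  exact key

lemma inv_sub_nonneg {M N B : Matrix (Fin n) (Fin n) ℝ}
    (h1 : M * B = 1) (h2 : B * M = 1) (hB : ∀ i j, 0 ≤ B i j) (hN : ∀ i j, 0 ≤ N i j)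
    (hBN : ‖B * N‖ < 1) :
    ∃ B', (M - N) * B' = 1 ∧ B' * (M - N) = 1 ∧ ∀ i j, 0 ≤ B' i j := by
  set x := B * N with hx
  have hsum : Summable (fun k : ℕ => x ^ k) := summable_geometric_of_norm_lt_one hBN
  have g1 : (1 - x) * (∑' k : ℕ, x ^ k) = 1 := mul_neg_geom_series x hBN
  have g2 : (∑' k : ℕ, x ^ k) * (1 - x) = 1 := geom_series_mul_neg x hBN
  have hMN : M - N = M * (1 - x) := by
    rw [mul_sub, mul_one, hx, ← mul_assoc, h1, one_mul]
  refine ⟨(∑' k : ℕ, x ^ k) * B, ?_, ?_, ?_⟩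
  · calc (M - N) * ((∑' k : ℕ, x ^ k) * B)
        = M * ((1 - x) * (∑' k : ℕ, x ^ k)) * B := by
          rw [hMN, mul_assoc, mul_assoc, mul_assoc]
      _ = 1 := by rw [g1, mul_one, h1]
  · calc (∑' k : ℕ, x ^ k) * B * (M - N)
        = (∑' k : ℕ, x ^ k) * (B * M - B * N) := by rw [mul_assoc, mul_sub]
      _ = 1 := by rw [h2, ← hx, g2]
  · have hxnn : ∀ i j, 0 ≤ x i j := entry_mul_nonneg hB hN
    exact entry_mul_nonneg (fun i j => entry_tsum_nonneg hsum (entry_pow_nonneg hxnn) i j) hB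

lemma resolvent_nonneg (Atil : Matrix (Fin n) (Fin n) ℝ) (hAtil : ∀ i j, 0 ≤ Atil i j)
    {s : ℝ} (hdet : ∀ u, s ≤ u → (u • (1 : Matrix (Fin n) (Fin n) ℝ) - Atil).det ≠ 0) :
    ∀ i j, 0 ≤ (s • (1 : Matrix (Fin n) (Fin n) ℝ) - Atil)⁻¹ i j := by
  set T := max s (‖Atil‖ + 1) with hT
  have hsT : s ≤ T := le_max_left _ _
  have hAT : ‖Atil‖ + 1 ≤ T := le_max_right _ _
  have hA0 : 0 ≤ ‖Atil‖ := norm_nonneg _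
  have hunit : ∀ u, s ≤ u → IsUnit (u • (1 : Matrix (Fin n) (Fin n) ℝ) - Atil).det :=
    fun u hu => isUnit_iff_ne_zero.mpr (hdet u hu)
  have base : ∀ u, T ≤ u → ∀ i j, 0 ≤ (u • (1 : Matrix (Fin n) (Fin n) ℝ) - Atil)⁻¹ i j := by
    intro u hu
    have hupos : 0 < u := by linarith
    have h1 : (u • (1 : Matrix (Fin n) (Fin n) ℝ)) * (u⁻¹ • 1) = 1 := by
      rw [Matrix.smul_mul, Matrix.mul_smul, one_mul, smul_smul,
        mul_inv_cancel₀ hupos.ne', one_smul]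
    have h2 : (u⁻¹ • (1 : Matrix (Fin n) (Fin n) ℝ)) * (u • 1) = 1 := by
      rw [Matrix.smul_mul, Matrix.mul_smul, one_mul, smul_smul,
        inv_mul_cancel₀ hupos.ne', one_smul]
    have hBnn : ∀ i j, 0 ≤ (u⁻¹ • (1 : Matrix (Fin n) (Fin n) ℝ)) i j := by
      intro i j
      rw [Matrix.smul_apply, smul_eq_mul]
      exact mul_nonneg (inv_nonneg.mpr hupos.le)
        (by by_cases h : i = j <;> simp [Matrix.one_apply, h])
    have hnorm : ‖(u⁻¹ • (1 : Matrix (Fin n) (Fin n) ℝ)) * Atil‖ < 1 := by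
      rw [Matrix.smul_mul, one_mul, norm_smul, Real.norm_eq_abs,
        abs_of_pos (inv_pos.mpr hupos), ← div_eq_inv_mul, div_lt_one hupos]
      linarith
    obtain ⟨B', hB1, hB2, hB3⟩ := inv_sub_nonneg h1 h2 hBnn hAtil hnorm
    intro i j
    rw [Matrix.inv_eq_right_inv hB1]
    exact hB3 i j
  obtain ⟨C, hCpos, hC⟩ := entries_bound Atil (T := T) (fun u hu => hdet u hu.1)
  set δ : ℝ := (2 * (n * C + 1))⁻¹ with hδ
  have hnC0 : (0:ℝ) ≤ n * C := by positivity
  have hδpos : 0 < δ := by positivity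
  have hδnC : δ * (n * C) < 1 := by
    have h1 : δ * (n * C + 1) = 1 / 2 := by
      rw [hδ]; field_simp
    nlinarith
  have main : ∀ k : ℕ, ∀ u, s ≤ u → T - k * δ ≤ u →
      ∀ i j, 0 ≤ (u • (1 : Matrix (Fin n) (Fin n) ℝ) - Atil)⁻¹ i j := by
    intro k
    induction k with
    | zero => intro u hsu hTu; exact base u (by simpa using hTu)
    | succ m ih =>
      intro u hsu hTu i j
      by_cases hcase : T - m * δ ≤ u
      · exact ih u hsu hcase i j
      · push_neg at hcase
        set w := T - m * δ with hw
        have hsw : s ≤ w := le_trans hsu hcase.le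
        have hwT : w ≤ T := by
          have h0 : (0:ℝ) ≤ (m:ℝ) * δ := by positivity
          rw [hw]; linarith
        have hBw : ∀ i j, 0 ≤ (w • (1 : Matrix (Fin n) (Fin n) ℝ) - Atil)⁻¹ i j :=
          ih w hsw (le_refl w)
        have hu1 : (w • (1 : Matrix (Fin n) (Fin n) ℝ) - Atil) *
            (w • (1 : Matrix (Fin n) (Fin n) ℝ) - Atil)⁻¹ = 1 :=
          Matrix.mul_nonsing_inv _ (hunit w hsw)
        have hu2 : (w • (1 : Matrix (Fin n) (Fin n) ℝ) - Atil)⁻¹ *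
            (w • (1 : Matrix (Fin n) (Fin n) ℝ) - Atil) = 1 :=
          Matrix.nonsing_inv_mul _ (hunit w hsw)
        set c := w - u with hc
        have hc0 : 0 < c := by rw [hc]; linarith
        have hcδ : c ≤ δ := by
          have hm : ((m:ℝ) + 1) * δ = (m:ℝ) * δ + δ := by ring
          have : T - ((m:ℕ) + 1 : ℕ) * δ ≤ u := hTu
          push_cast at this
          rw [hc, hw]
          linarith
        have hNnn : ∀ i j, 0 ≤ (c • (1 : Matrix (Fin n) (Fin n) ℝ)) i j := by
          intro i j
          rw [Matrix.smul_apply, smul_eq_mul]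
          exact mul_nonneg hc0.le (by by_cases h : i = j <;> simp [Matrix.one_apply, h])
        have hnorm : ‖(w • (1 : Matrix (Fin n) (Fin n) ℝ) - Atil)⁻¹ *
            (c • (1 : Matrix (Fin n) (Fin n) ℝ))‖ < 1 := by
          rw [Matrix.mul_smul, mul_one, norm_smul, Real.norm_eq_abs, abs_of_pos hc0]
          have hb : ‖(w • (1 : Matrix (Fin n) (Fin n) ℝ) - Atil)⁻¹‖ ≤ n * C :=
            norm_le_of_entries hCpos.le (fun i j => hC w ⟨hsw, hwT⟩ i j)
          calc c * ‖(w • (1 : Matrix (Fin n) (Fin n) ℝ) - Atil)⁻¹‖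
              ≤ δ * (n * C) := mul_le_mul hcδ hb (norm_nonneg _) hδpos.le
            _ < 1 := hδnC
        obtain ⟨B', hB1, hB2, hB3⟩ := inv_sub_nonneg hu1 hu2 hBw hNnn hnorm
        have heq : w • (1 : Matrix (Fin n) (Fin n) ℝ) - Atil -
            c • (1 : Matrix (Fin n) (Fin n) ℝ) =
            u • (1 : Matrix (Fin n) (Fin n) ℝ) - Atil := by
          rw [hc]
          module
        rw [heq] at hB1
        rw [Matrix.inv_eq_right_inv hB1]
        exact hB3 i j
  obtain ⟨k, hk⟩ : ∃ k : ℕ, T - k * δ ≤ s := by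
    obtain ⟨k, hk⟩ := exists_nat_ge ((T - s) / δ)
    refine ⟨k, ?_⟩
    rw [div_le_iff₀ hδpos] at hk
    linarith
  exact main k s le_rfl hk

end Resolvent

lemma evalCharpoly {n : ℕ} {R : Type*} [CommRing R] (M : Matrix (Fin n) (Fin n) R) (t : R) :
    M.charpoly.eval t = (t • (1 : Matrix (Fin n) (Fin n) R) - M).det := by
  have h : M.charpoly.eval t = ((charmatrix M).map (eval t)).det := by
    rw [Matrix.charpoly, ← Polynomial.coe_evalRingHom, RingHom.map_det]
    rfl
  rw [h]
  congr 1
  ext i j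
  by_cases h : i = j <;>
    simp [h, charmatrix_apply_eq, charmatrix_apply_ne, Matrix.one_apply, Matrix.smul_apply]

def specC {n : ℕ} (A : Matrix (Fin n) (Fin n) ℝ) : Set ℂ :=
  spectrum ℂ (A.map (algebraMap ℝ ℂ))

lemma mem_specC_iff {n : ℕ} (M : Matrix (Fin n) (Fin n) ℝ) (μ : ℂ) :
    μ ∈ specC M ↔ (M.charpoly.map (algebraMap ℝ ℂ)).eval μ = 0 := by
  rw [specC, spectrum.mem_iff, Algebra.algebraMap_eq_smul_one, ← Matrix.charpoly_map,
    evalCharpoly, Matrix.isUnit_iff_isUnit_det, isUnit_iff_ne_zero, not_not]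

theorem stmt14 {n : ℕ} (hn : 1 ≤ n) (Atil : Matrix (Fin n) (Fin n) ℝ)
    (hAtil : ∀ i j, 0 ≤ Atil i j) (A : Matrix (Fin n) (Fin n) ℝ)
    (hA : A = Atil - 1) :
    (∀ μ ∈ specC Atil, ‖μ‖ < 1) ↔ (∀ k ≤ n, 0 < A.charpoly.coeff k) := by
  subst hA
  have hcard : (Atil - (1 : Matrix (Fin n) (Fin n) ℝ)).charpoly.natDegree = n := by
    rw [Matrix.charpoly_natDegree_eq_dim, Fintype.card_fin]
  have hrel : ∀ t : ℝ, (Atil - 1).charpoly.eval t = Atil.charpoly.eval (t + 1) := by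
    intro t
    rw [evalCharpoly, evalCharpoly]
    congr 1
    module
  have hrelC : ∀ z : ℂ, (((Atil - 1).charpoly.map (algebraMap ℝ ℂ)).eval z)
      = (Atil.charpoly.map (algebraMap ℝ ℂ)).eval (z + 1) := by
    intro z
    rw [← Matrix.charpoly_map, ← Matrix.charpoly_map, evalCharpoly, evalCharpoly]
    congr 1
    have hmap : (Atil - 1).map (algebraMap ℝ ℂ) = Atil.map (algebraMap ℝ ℂ) - 1 := by
      ext i j
      by_cases h : i = j <;>
        simp [Matrix.map_apply, Matrix.sub_apply, Matrix.one_apply, h]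
    rw [hmap]
    module
  constructor
  · intro hspec k hk
    refine hurwitz n ((Atil - 1).charpoly) hcard (Matrix.charpoly_monic _) ?_ k
      (by rw [hcard]; exact hk)
    intro z hz
    have hz1 : (z + 1) ∈ specC Atil :=
      (mem_specC_iff Atil (z + 1)).mpr (by rw [← hrelC z]; exact hz)
    have habs := hspec (z + 1) hz1
    have hre : (z + 1).re ≤ ‖z + 1‖ := Complex.re_le_norm _
    have h2 : z.re + 1 ≤ ‖z + 1‖ := by simpa using hre
    linarith
  · intro hcoeff μ hμ
    by_contra hcon
    push_neg at hcon
    set s : ℝ := ‖μ‖ with hs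
    have hs1 : 1 ≤ s := hcon
    have hevalpos : ∀ u : ℝ, s ≤ u → 0 < (Atil - 1).charpoly.eval (u - 1) := by
      intro u hu
      have hu0 : 0 ≤ u - 1 := by linarith
      rw [Polynomial.eval_eq_sum_range, hcard]
      apply Finset.sum_pos'
      · intro i hi
        rw [Finset.mem_range] at hi
        exact mul_nonneg (hcoeff i (by omega)).le (pow_nonneg hu0 i)
      · refine ⟨0, Finset.mem_range.mpr (by omega), ?_⟩
        rw [pow_zero, mul_one]
        exact hcoeff 0 (by omega)
    have hdet : ∀ u, s ≤ u → (u • (1 : Matrix (Fin n) (Fin n) ℝ) - Atil).det ≠ 0 := by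
      intro u hu
      rw [← evalCharpoly]
      have h3 := hevalpos u hu
      rw [hrel (u - 1), sub_add_cancel] at h3
      exact h3.ne'
    have hres := resolvent_nonneg Atil hAtil hdet
    have hdet0 : (μ • (1 : Matrix (Fin n) (Fin n) ℂ) - Atil.map (algebraMap ℝ ℂ)).det = 0 := by
      have h4 := (mem_specC_iff Atil μ).mp hμ
      rwa [← Matrix.charpoly_map, evalCharpoly] at h4
    obtain ⟨v, hv0, hvec⟩ := (Matrix.exists_mulVec_eq_zero_iff).mpr hdet0
    have heig : (Atil.map (algebraMap ℝ ℂ)) *ᵥ v = μ • v := by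
      rw [Matrix.sub_mulVec, Matrix.smul_mulVec, Matrix.one_mulVec, sub_eq_zero] at hvec
      exact hvec.symm
    set x : Fin n → ℝ := fun i => ‖v i‖ with hx
    obtain ⟨i₀, hi₀⟩ : ∃ i, v i ≠ 0 := Function.ne_iff.mp hv0
    have hxpos : 0 < x i₀ := by
      rw [hx]
      exact norm_pos_iff.mpr hi₀
    have hy : ∀ i, ((s • (1 : Matrix (Fin n) (Fin n) ℝ) - Atil) *ᵥ x) i ≤ 0 := by
      intro i
      rw [Matrix.sub_mulVec, Matrix.smul_mulVec, Matrix.one_mulVec]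
      have h2 : μ * v i = ∑ j, (algebraMap ℝ ℂ) (Atil i j) * v j := by
        have h5 := congrFun heig i
        simp only [Matrix.mulVec, dotProduct, Pi.smul_apply, smul_eq_mul,
          Matrix.map_apply] at h5
        rw [← h5]
      have hkey : s * x i ≤ (Atil *ᵥ x) i := by
        calc s * x i = ‖μ * v i‖ := (norm_mul μ (v i)).symm
          _ = ‖∑ j, (algebraMap ℝ ℂ) (Atil i j) * v j‖ := by rw [h2]
          _ ≤ ∑ j, ‖(algebraMap ℝ ℂ) (Atil i j) * v j‖ :=
              norm_sum_le _ _
          _ = ∑ j, Atil i j * x j := by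
              apply Finset.sum_congr rfl
              intro j _
              rw [norm_mul]
              congr 1
              rw [show (algebraMap ℝ ℂ) (Atil i j) = ((Atil i j : ℝ) : ℂ) from rfl,
                Complex.norm_real, Real.norm_eq_abs, abs_of_nonneg (hAtil i j)]
          _ = (Atil *ᵥ x) i := by simp [Matrix.mulVec, dotProduct]
      simp only [Pi.sub_apply, Pi.smul_apply, smul_eq_mul]
      linarith
    have hunits : IsUnit (s • (1 : Matrix (Fin n) (Fin n) ℝ) - Atil).det :=
      isUnit_iff_ne_zero.mpr (hdet s le_rfl)
    have hxeq : x = (s • (1 : Matrix (Fin n) (Fin n) ℝ) - Atil)⁻¹ *ᵥ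
        ((s • (1 : Matrix (Fin n) (Fin n) ℝ) - Atil) *ᵥ x) := by
      rw [Matrix.mulVec_mulVec, Matrix.nonsing_inv_mul _ hunits, Matrix.one_mulVec]
    have hfin : x i₀ ≤ 0 := by
      have h6 := congrFun hxeq i₀
      rw [h6]
      simp only [Matrix.mulVec, dotProduct]
      apply Finset.sum_nonpos
      intro j _
      exact mul_nonpos_of_nonneg_of_nonpos (hres i₀ j) (hy j)
    linarith
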